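/- Let 𝒳 be a finite set; let P^f, P^R, and P^{f⁰} be probability distributions on 𝒳 such that P^f satisfies overlap with respect to P^{f⁰}; let P̂^R : 𝒳 → ℝ be an arbitrary function with P̂^R(x) > 0 for all x (a possibly misspecified estimate of P^R); and let g : 𝒳 → ℝ. Let (Ω, μ) be a probability space; for i = 1,…,n let X_i : Ω → 𝒳 have law P^R and Y_i : Ω → ℝ be integrable with ∫ Y_i·1{X_i = x} dμ = g(x)·P^R(x) for all x; for j = 1,…,m let X̃_j : Ω → 𝒳 have law P^{f⁰}. Then the estimator (1/n) ∑_{i=1}^n (P^f(X_i)/P̂^R(X_i))·(Y_i − g(X_i)) + (1/m) ∑_{j=1}^m (P^f(X̃_j)/P^{f⁰}(X̃_j))·g(X̃_j) has expectation ∑_{x∈𝒳} P^f(x)·g(x) = V(f). (Theorem 2, case 2: unbiasedness of DR-CPO when the outcome model equals the true conditional mean g, regardless of whether the estimated randomization distribution P̂^R is correct.) -/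

import Mathlib

/-!
Every integral is computed by splitting `Ω` along the level sets `{X = x}` of the sample, on
which any function of `X` is constant. Since `g` is the conditional mean of `Y`, the residual
`Y - g (X)` integrates to zero over each level set, so the correction term is centred whatever
weight `Pf / PRhat` it carries. The importance weight `Pf / Pf0` turns the law `Pf0` into `Pf`;
where `Pf0 x = 0` the quotient is the junk value `0`, which is harmless because overlap gives
`Pf x = 0` there.
-/

open MeasureTheory Finset

lemma Set.iUnion_setOf_eq_univ {α Ω : Type*} (X : Ω → α) : ⋃ x, {ω | X ω = x} = Set.univ :=
  Set.iUnion_eq_univ_iff.2 fun ω => ⟨X ω, rfl⟩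

section LevelSets

variable {α Ω : Type*} [MeasurableSpace α] [MeasurableSingletonClass α]
  [MeasurableSpace Ω] {μ : Measure Ω} {X : Ω → α}

lemma integrableOn_setOf_comp_eq_mul (hX : Measurable X) (c : α → ℝ) {Y : Ω → ℝ}
    (hY : Integrable Y μ) (x : α) :
    IntegrableOn (fun ω => c (X ω) * Y ω) {ω | X ω = x} μ :=
  (hY.const_mul (c x)).integrableOn.congr_fun (fun ω (hω : X ω = x) => by rw [hω])
    (hX (measurableSet_singleton x))

lemma integrable_comp_mul [Finite α] (hX : Measurable X) (c : α → ℝ) {Y : Ω → ℝ}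
    (hY : Integrable Y μ) : Integrable (fun ω => c (X ω) * Y ω) μ := by
  rw [← integrableOn_univ, ← Set.iUnion_setOf_eq_univ X]
  exact integrableOn_finite_iUnion.2 (integrableOn_setOf_comp_eq_mul hX c hY)

lemma integral_comp_mul_eq_sum [Fintype α] (hX : Measurable X) (c : α → ℝ) {Y : Ω → ℝ}
    (hY : Integrable Y μ) :
    ∫ ω, c (X ω) * Y ω ∂μ = ∑ x, c x * ∫ ω in {ω | X ω = x}, Y ω ∂μ := by
  rw [← setIntegral_univ, ← Set.iUnion_setOf_eq_univ X,
    integral_iUnion_fintype (s := fun x => {ω | X ω = x})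
      (fun x => hX (measurableSet_singleton x))
      (fun x y hxy => Set.disjoint_left.2 fun ω hx hy => hxy (hx.symm.trans hy))
      (integrableOn_setOf_comp_eq_mul hX c hY)]
  refine sum_congr rfl fun x _ => ?_
  rw [← integral_const_mul]
  exact setIntegral_congr_fun (hX (measurableSet_singleton x)) fun ω (hω : X ω = x) => by rw [hω]

lemma integral_comp_eq_sum [Fintype α] [IsFiniteMeasure μ] (hX : Measurable X) (c : α → ℝ) :
    ∫ ω, c (X ω) ∂μ = ∑ x, c x * (μ {ω | X ω = x}).toReal := by
  simpa [Measure.real] using integral_comp_mul_eq_sum hX c (integrable_const (1 : ℝ)) (μ := μ)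

theorem integral_weight_mul_residual_eq_zero [Fintype α] [IsFiniteMeasure μ] (hX : Measurable X)
    {Y : Ω → ℝ} (hY : Integrable Y μ) {g : α → ℝ}
    (hcond : ∀ x, ∫ ω in {ω | X ω = x}, Y ω ∂μ = g x * (μ {ω | X ω = x}).toReal) (w : α → ℝ) :
    ∫ ω, w (X ω) * (Y ω - g (X ω)) ∂μ = 0 := by
  have hwg : Integrable (fun ω => w (X ω) * g (X ω)) μ :=
    Integrable.of_finite.comp_measurable (g := fun x => w x * g x) hX
  simp_rw [mul_sub]
  rw [integral_sub (integrable_comp_mul hX w hY) hwg, integral_comp_mul_eq_sum hX w hY,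
    integral_comp_eq_sum hX (fun x => w x * g x)]
  simp [hcond, mul_assoc]

theorem integral_importance_weight_mul [Fintype α] [IsFiniteMeasure μ] (hX : Measurable X)
    {p q : α → ℝ} (hlaw : ∀ x, (μ {ω | X ω = x}).toReal = q x) (hpq : ∀ x, q x = 0 → p x = 0)
    (g : α → ℝ) :
    ∫ ω, p (X ω) / q (X ω) * g (X ω) ∂μ = ∑ x, p x * g x := by
  rw [integral_comp_eq_sum hX (fun x => p x / q x * g x)]
  refine sum_congr rfl fun x _ => ?_
  rw [hlaw]
  by_cases hq : q x = 0
  · simp [hq, hpq x hq]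
  · field_simp

end LevelSets

theorem dr_cpo_unbiased_correct_outcome_model_general {𝒳 : Type*} [Fintype 𝒳]
    [MeasurableSpace 𝒳] [MeasurableSingletonClass 𝒳]
    (Pf PR Pf0 : 𝒳 → ℝ)
    (h_overlap_0 : ∀ x, Pf0 x = 0 → Pf x = 0)
    (PRhat : 𝒳 → ℝ)
    (g : 𝒳 → ℝ)
    {Ω : Type*} [MeasurableSpace Ω] (μ : Measure Ω) [IsProbabilityMeasure μ]
    (n m : ℕ) (hm : 0 < m)
    (X : Fin n → Ω → 𝒳) (hX : ∀ i, Measurable (X i))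
    (hlaw : ∀ i x, (μ {ω | X i ω = x}).toReal = PR x)
    (Y : Fin n → Ω → ℝ) (hY : ∀ i, Integrable (Y i) μ)
    (hcond : ∀ i x, ∫ ω in {ω | X i ω = x}, Y i ω ∂μ = g x * PR x)
    (Xt : Fin m → Ω → 𝒳) (hXt : ∀ j, Measurable (Xt j))
    (hlawt : ∀ j x, (μ {ω | Xt j ω = x}).toReal = Pf0 x) :
    ∫ ω, ((1 / (n : ℝ)) * ∑ i, (Pf (X i ω) / PRhat (X i ω)) * (Y i ω - g (X i ω))
        + (1 / (m : ℝ)) * ∑ j, (Pf (Xt j ω) / Pf0 (Xt j ω)) * g (Xt j ω)) ∂μ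
      = ∑ x, Pf x * g x := by
  have hresidual_int : ∀ i, Integrable
      (fun ω => Pf (X i ω) / PRhat (X i ω) * (Y i ω - g (X i ω))) μ := fun i =>
    integrable_comp_mul (hX i) (fun x => Pf x / PRhat x)
      ((hY i).sub (Integrable.of_finite.comp_measurable (g := g) (hX i)))
  have hweight_int : ∀ j, Integrable (fun ω => Pf (Xt j ω) / Pf0 (Xt j ω) * g (Xt j ω)) μ :=
    fun j => Integrable.of_finite.comp_measurable (g := fun x => Pf x / Pf0 x * g x) (hXt j)
  have hresidual : ∀ i, ∫ ω, Pf (X i ω) / PRhat (X i ω) * (Y i ω - g (X i ω)) ∂μ = 0 :=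
    fun i => integral_weight_mul_residual_eq_zero (hX i) (hY i) (fun x => by rw [hcond, hlaw])
      (fun x => Pf x / PRhat x)
  have hweight : ∀ j, ∫ ω, Pf (Xt j ω) / Pf0 (Xt j ω) * g (Xt j ω) ∂μ = ∑ x, Pf x * g x :=
    fun j => integral_importance_weight_mul (hXt j) (hlawt j) h_overlap_0 g
  rw [integral_add ((integrable_finsetSum _ fun i _ => hresidual_int i).const_mul _)
      ((integrable_finsetSum _ fun j _ => hweight_int j).const_mul _),
    integral_const_mul, integral_const_mul, integral_finsetSum _ fun i _ => hresidual_int i,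
    integral_finsetSum _ fun j _ => hweight_int j]
  simp only [hresidual, hweight, sum_const_zero, mul_zero, zero_add, sum_const, card_univ,
    Fintype.card_fin, nsmul_eq_mul]
  field_simp

/-- **Theorem 2, case 2.** Unbiasedness of the DR-CPO estimator when the outcome model
equals the true conditional mean `g`, regardless of whether the estimated randomization
distribution `P̂R` is correct:
`∫ [(1/n) ∑ i, (Pf(Xᵢ)/P̂R(Xᵢ))(Yᵢ − g(Xᵢ)) + (1/m) ∑ j, (Pf(X̃ⱼ)/Pf0(X̃ⱼ)) g(X̃ⱼ)] dμ
  = ∑ x, Pf x * g x = V(f)`. -/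
theorem dr_cpo_unbiased_correct_outcome_model {𝒳 : Type*} [Fintype 𝒳]
    [MeasurableSpace 𝒳] [MeasurableSingletonClass 𝒳]
    (Pf PR Pf0 : 𝒳 → ℝ)
    (hPf_nonneg : ∀ x, 0 ≤ Pf x) (hPf_sum : ∑ x, Pf x = 1)
    (hPR_nonneg : ∀ x, 0 ≤ PR x) (hPR_sum : ∑ x, PR x = 1)
    (hPf0_nonneg : ∀ x, 0 ≤ Pf0 x) (hPf0_sum : ∑ x, Pf0 x = 1)
    (h_overlap_0 : ∀ x, Pf0 x = 0 → Pf x = 0)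
    (PRhat : 𝒳 → ℝ) (hPRhat_pos : ∀ x, 0 < PRhat x)
    (g : 𝒳 → ℝ)
    {Ω : Type*} [MeasurableSpace Ω] (μ : Measure Ω) [IsProbabilityMeasure μ]
    (n m : ℕ) (hn : 0 < n) (hm : 0 < m)
    (X : Fin n → Ω → 𝒳) (hX : ∀ i, Measurable (X i))
    (hlaw : ∀ i x, (μ {ω | X i ω = x}).toReal = PR x)
    (Y : Fin n → Ω → ℝ) (hY : ∀ i, Integrable (Y i) μ)
    (hcond : ∀ i x, ∫ ω in {ω | X i ω = x}, Y i ω ∂μ = g x * PR x)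
    (Xt : Fin m → Ω → 𝒳) (hXt : ∀ j, Measurable (Xt j))
    (hlawt : ∀ j x, (μ {ω | Xt j ω = x}).toReal = Pf0 x) :
    ∫ ω, ((1 / (n : ℝ)) * ∑ i, (Pf (X i ω) / PRhat (X i ω)) * (Y i ω - g (X i ω))
        + (1 / (m : ℝ)) * ∑ j, (Pf (Xt j ω) / Pf0 (Xt j ω)) * g (Xt j ω)) ∂μ
      = ∑ x, Pf x * g x :=
  dr_cpo_unbiased_correct_outcome_model_general Pf PR Pf0 h_overlap_0 PRhat g μ n m hm X hX hlaw Y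
    hY hcond Xt hXt hlawt
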